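/- arXiv:1311.0138 — 3 statements merged into one kernel-verified Lean document; each statement's English description precedes it below -/
import Mathlib

section
/- The function β(n) = min{ℓ(w) : w ∈ F₂^{(n)}, w ≠ e} satisfies β(n+m) ≤ β(n)·β(m) for all n, m; more precisely, substituting the shortest nontrivial element of F₂^{(n)} (as a word in two free generators) into a free pair of elements of F₂^{(m)} of length β(m) yields a nontrivial element of F₂^{(n+m)} of length at most β(n)·β(m). -/
/-!
Let `w` be a shortest nontrivial element of `F₂⁽ⁿ⁾`. Its cyclic reduction is a conjugate, hence
also in `F₂⁽ⁿ⁾` and no longer, so `w` may be taken cyclically reduced. Applying to `w` a signed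
swap `s` of the generators (an automorphism permuting the letters) gives `s w ∈ F₂⁽ⁿ⁾`, and `s`
can be chosen so that no cancellation occurs between any two consecutive blocks among
`w, w⁻¹, s w, (s w)⁻¹` other than mutually inverse ones. The substitution `x ↦ w, y ↦ s w` then
multiplies the length of every reduced word by `|w|`. Substituting a shortest nontrivial element
of `F₂⁽ᵐ⁾` yields a nontrivial element of `F₂⁽ⁿ⁺ᵐ⁾` of length `β(n) β(m)`. Nontriviality of all
`F₂⁽ⁿ⁾`, needed for `β` to be a minimum, follows from the same construction by induction.
-/

/-- `β n` is the minimal word length of a nontrivial element of the `n`-th derived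
subgroup of the free group on two generators. -/
noncomputable def betaGirth (n : ℕ) : ℕ :=
  sInf {k | ∃ w ∈ derivedSeries (FreeGroup (Fin 2)) n, w ≠ 1 ∧ w.norm = k}

open List

theorem Subgroup.map_derivedSeries_le_derivedSeries_add {G H : Type*} [Group G] [Group H]
    {n : ℕ} (φ : H →* G) (hφ : φ.range ≤ derivedSeries G n) :
    ∀ m, (derivedSeries H m).map φ ≤ derivedSeries G (n + m)
  | 0 => by rwa [derivedSeries_zero, ← MonoidHom.range_eq_map]
  | m + 1 => by
    rw [derivedSeries_succ, map_commutator, ← Nat.add_assoc, derivedSeries_succ]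
    exact commutator_mono (map_derivedSeries_le_derivedSeries_add φ hφ m)
      (map_derivedSeries_le_derivedSeries_add φ hφ m)

namespace FreeGroup

variable {α β : Type*}

theorem lift_mem_derivedSeries_add {G : Type*} [Group G] {n m : ℕ} {f : α → G}
    (hf : ∀ a, f a ∈ derivedSeries G n) {u : FreeGroup α}
    (hu : u ∈ derivedSeries (FreeGroup α) m) : lift f u ∈ derivedSeries G (n + m) := by
  refine Subgroup.map_derivedSeries_le_derivedSeries_add (lift f) ?_ m ⟨u, hu, rfl⟩
  rw [range_lift_eq_closure, Subgroup.closure_le]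
  rintro _ ⟨a, rfl⟩
  exact hf a

theorem IsReduced.invRev {L : List (α × Bool)} (h : IsReduced L) : IsReduced (invRev L) := by
  rw [IsReduced, FreeGroup.invRev, isChain_reverse, isChain_map]
  exact h.imp fun a b hab hba => by simp [hab hba.symm]

theorem head?_invRev (L : List (α × Bool)) :
    (invRev L).head? = L.getLast?.map fun x => (x.1, !x.2) := by
  simp [FreeGroup.invRev, head?_reverse, getLast?_map]

theorem getLast?_invRev (L : List (α × Bool)) :
    (invRev L).getLast? = L.head?.map fun x => (x.1, !x.2) := by
  simp [FreeGroup.invRev, getLast?_reverse, head?_map]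

def substBlock (σ : α → List (β × Bool)) (t : α × Bool) : List (β × Bool) :=
  cond t.2 (σ t.1) (invRev (σ t.1))

theorem substBlock_flip (σ : α → List (β × Bool)) (t : α × Bool) :
    substBlock σ (t.1, !t.2) = invRev (substBlock σ t) := by
  rcases t with ⟨a, _ | _⟩ <;> simp [substBlock, invRev_invRev]

theorem lift_mk_eq_mk_flatMap (σ : α → List (β × Bool)) (L : List (α × Bool)) :
    lift (fun a => mk (σ a)) (mk L) = mk (L.flatMap (substBlock σ)) := by
  rw [lift_mk]
  induction L with
  | nil => rfl
  | cons t L ih =>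
    rw [map_cons, prod_cons, ih, flatMap_cons, ← mul_mk]
    rcases t with ⟨a, _ | _⟩ <;> simp [substBlock, inv_mk]

theorem length_flatMap_substBlock {σ : α → List (β × Bool)} {k : ℕ}
    (hσ : ∀ a, (σ a).length = k) (L : List (α × Bool)) :
    (L.flatMap (substBlock σ)).length = L.length * k := by
  have : ∀ t, (substBlock σ t).length = k := by
    rintro ⟨a, _ | _⟩ <;> simp [substBlock, hσ]
  simp [length_flatMap, this]

theorem IsReduced.flatMap_substBlock {σ : α → List (β × Bool)} (hσ : ∀ a, IsReduced (σ a))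
    (hne : ∀ a, σ a ≠ []) (hinj : Function.Injective fun t => (substBlock σ t).getLast?)
    {L : List (α × Bool)} (hL : IsReduced L) : IsReduced (L.flatMap (substBlock σ)) := by
  have hblock : ∀ t, IsReduced (substBlock σ t) := by
    rintro ⟨a, _ | _⟩
    exacts [(hσ a).invRev, hσ a]
  have hblock_ne : ∀ t, substBlock σ t ≠ [] := by
    rintro ⟨a, _ | _⟩ h
    · exact hne a (by simpa [substBlock, ← length_eq_zero_iff] using h)
    · exact hne a h
  rw [IsReduced, flatMap_def, isChain_flatten fun h => by
    obtain ⟨t, -, ht⟩ := mem_map.1 h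
    exact hblock_ne t ht]
  refine ⟨fun l hl => ?_, isChain_map_of_isChain _ ?_ hL⟩
  · obtain ⟨t, -, rfl⟩ := mem_map.1 hl
    exact hblock t
  intro s t hst x hx y hy hxy
  -- the first letter of the block of `t` is the inverse of the last letter of the block of `t⁻¹`
  rw [← invRev_invRev (L₁ := substBlock σ t), ← substBlock_flip, head?_invRev] at hy
  obtain ⟨z, hz, rfl⟩ := Option.mem_map.1 hy
  by_contra hne
  have hxz : x = z := Prod.ext hxy (by simpa using hne)
  have hsz : s = (t.1, !t.2) :=
    hinj <| (Option.mem_def.1 hx).trans (hxz ▸ Option.mem_def.1 hz).symm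
  simp [hsz] at hst

open reduceCyclically in
theorem exists_isCyclicallyReduced_conj [DecidableEq α] (x : FreeGroup α) :
    ∃ L : List (α × Bool), ∃ g, IsCyclicallyReduced L ∧ mk L = g * x * g⁻¹ ∧ L.length ≤ x.norm := by
  have hx := conj_conjugator_reduceCyclically x.toWord
  refine ⟨reduceCyclically x.toWord, (mk (conjugator x.toWord))⁻¹,
    isCyclicallyReduced isReduced_toWord, ?_, ?_⟩
  · have hx' := congrArg mk hx
    rw [← mul_mk, ← mul_mk, ← inv_mk, mk_toWord] at hx'
    set g := mk (conjugator x.toWord)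
    calc mk (reduceCyclically x.toWord)
        = g⁻¹ * (g * mk (reduceCyclically x.toWord) * g⁻¹) * g⁻¹⁻¹ := by group
      _ = g⁻¹ * x * g⁻¹⁻¹ := by rw [hx']
  · have := congrArg length hx
    simp only [length_append, invRev_length] at this
    rw [norm]
    omega

def swapGen (c : Bool) (t : Fin 2 × Bool) : Fin 2 × Bool := (t.1 + 1, xor t.2 c)

theorem IsReduced.map_swapGen {L : List (Fin 2 × Bool)} (h : IsReduced L) (c : Bool) :
    IsReduced (L.map (swapGen c)) := by
  rw [IsReduced, isChain_map]
  exact h.imp fun x y hxy hs => by simpa [swapGen] using hxy (by simpa [swapGen] using hs)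

theorem mk_map_swapGen_mem_derivedSeries {n : ℕ} {L : List (Fin 2 × Bool)}
    (h : mk L ∈ derivedSeries (FreeGroup (Fin 2)) n) (c : Bool) :
    mk (L.map (swapGen c)) ∈ derivedSeries (FreeGroup (Fin 2)) n := by
  have hblock : substBlock (fun i => [swapGen c (i, true)]) = fun t => [swapGen c t] := by
    funext t
    rcases t with ⟨i, _ | _⟩ <;> simp [substBlock, swapGen, FreeGroup.invRev]
  have hmap : mk (L.map (swapGen c)) = lift (fun i => mk [swapGen c (i, true)]) (mk L) := by
    rw [lift_mk_eq_mk_flatMap, hblock, ← map_eq_flatMap]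
  rw [hmap]
  exact map_derivedSeries_le_derivedSeries _ n ⟨_, h, rfl⟩

/-- For a word running from the letter `p` to the letter `q`, the function below lists the last
letters of the four blocks `w, w⁻¹, s w, (s w)⁻¹`, where `s = swapGen c`. -/
theorem exists_swapGen_injective (p q : Fin 2 × Bool) (hpq : q.1 = p.1 → q.2 = p.2) :
    ∃ c : Bool, Function.Injective fun t : Fin 2 × Bool =>
      cond t.2 (![q, swapGen c q] t.1) ((![p, swapGen c p] t.1).1, !(![p, swapGen c p] t.1).2) := by
  revert p q
  decide

theorem exists_swapGen_norm_lift_eq {L : List (Fin 2 × Bool)} (hLcyc : IsCyclicallyReduced L)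
    (hL : L ≠ []) : ∃ c : Bool, ∀ u : FreeGroup (Fin 2),
      (lift (fun i => mk (![L, L.map (swapGen c)] i)) u).norm = u.norm * L.length := by
  obtain ⟨c, hc⟩ := exists_swapGen_injective (L.head hL) (L.getLast hL)
    (hLcyc.2 _ (getLast?_eq_some_getLast hL) _ (head?_eq_some_head hL))
  set σ : Fin 2 → List (Fin 2 × Bool) := ![L, L.map (swapGen c)]
  have hends : Function.Injective fun t => (substBlock σ t).getLast? := by
    convert (Option.some_injective _).comp hc using 1
    funext ⟨i, e⟩
    fin_cases i <;> cases e <;>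
      simp [σ, substBlock, getLast?_invRev, getLast?_eq_some_getLast hL, head?_eq_some_head hL]
  refine ⟨c, fun u => ?_⟩
  have hW : IsReduced (u.toWord.flatMap (substBlock σ)) :=
    IsReduced.flatMap_substBlock (Fin.forall_fin_two.2 ⟨hLcyc.1, hLcyc.1.map_swapGen c⟩)
      (Fin.forall_fin_two.2 ⟨hL, by simpa [σ] using hL⟩) hends isReduced_toWord
  have hv : lift (fun i => mk (σ i)) u = mk (u.toWord.flatMap (substBlock σ)) := by
    rw [← lift_mk_eq_mk_flatMap, mk_toWord]
  rw [hv, norm, toWord_mk, hW.reduce_eq,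
    length_flatMap_substBlock (Fin.forall_fin_two.2 ⟨rfl, length_map _⟩)]
  rfl

theorem exists_ne_one_mem_derivedSeries_add_norm_le {n m : ℕ} {a u : FreeGroup (Fin 2)}
    (ha : a ∈ derivedSeries (FreeGroup (Fin 2)) n) (ha1 : a ≠ 1)
    (hu : u ∈ derivedSeries (FreeGroup (Fin 2)) m) (hu1 : u ≠ 1) :
    ∃ v ∈ derivedSeries (FreeGroup (Fin 2)) (n + m), v ≠ 1 ∧ v.norm ≤ a.norm * u.norm := by
  obtain ⟨L, g, hLcyc, hLconj, hLlen⟩ := exists_isCyclicallyReduced_conj a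
  have hLmem : mk L ∈ derivedSeries (FreeGroup (Fin 2)) n :=
    hLconj ▸ (derivedSeries_normal _ n).conj_mem a ha g
  have hL : L ≠ [] := by
    rintro rfl
    exact ha1 (conj_eq_one_iff.1 (hLconj ▸ one_eq_mk).symm)
  obtain ⟨c, hnorm⟩ := exists_swapGen_norm_lift_eq hLcyc hL
  refine ⟨lift (fun i => mk (![L, L.map (swapGen c)] i)) u, lift_mem_derivedSeries_add
    (Fin.forall_fin_two.2 ⟨hLmem, mk_map_swapGen_mem_derivedSeries hLmem c⟩) hu, ?_, ?_⟩
  · rw [Ne, ← norm_eq_zero, hnorm]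
    exact Nat.mul_ne_zero (norm_eq_zero.not.2 hu1) (length_pos_iff.2 hL).ne'
  · rw [hnorm, mul_comm]
    exact Nat.mul_le_mul_right _ hLlen

open scoped commutatorElement in
theorem exists_ne_one_mem_derivedSeries (n : ℕ) :
    ∃ w ∈ derivedSeries (FreeGroup (Fin 2)) n, w ≠ 1 := by
  induction n with
  | zero => exact ⟨of 0, Subgroup.mem_top _, of_ne_one 0⟩
  | succ n ih =>
    obtain ⟨a, ha, ha1⟩ := ih
    have hcomm : ⁅(of 0 : FreeGroup (Fin 2)), (of 1 : FreeGroup (Fin 2))⁆ ∈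
        derivedSeries (FreeGroup (Fin 2)) 1 := by
      rw [derivedSeries_succ, derivedSeries_zero]
      exact Subgroup.commutator_mem_commutator (Subgroup.mem_top _) (Subgroup.mem_top _)
    obtain ⟨v, hv, hv1, -⟩ :=
      exists_ne_one_mem_derivedSeries_add_norm_le ha ha1 hcomm (by decide)
    exact ⟨v, hv, hv1⟩

end FreeGroup

theorem exists_norm_eq_betaGirth (n : ℕ) :
    ∃ w ∈ derivedSeries (FreeGroup (Fin 2)) n, w ≠ 1 ∧ w.norm = betaGirth n := by
  obtain ⟨w, hw, hw1⟩ := FreeGroup.exists_ne_one_mem_derivedSeries n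
  exact Nat.sInf_mem (s := {k | ∃ w ∈ derivedSeries (FreeGroup (Fin 2)) n, w ≠ 1 ∧ w.norm = k})
    ⟨_, w, hw, hw1, rfl⟩

theorem betaGirth_le_norm {n : ℕ} {w : FreeGroup (Fin 2)}
    (hw : w ∈ derivedSeries (FreeGroup (Fin 2)) n) (hw1 : w ≠ 1) : betaGirth n ≤ w.norm :=
  Nat.sInf_le ⟨w, hw, hw1, rfl⟩

theorem betaGirth_submultiplicative (n m : ℕ) :
    betaGirth (n + m) ≤ betaGirth n * betaGirth m := by
  obtain ⟨a, ha, ha1, hna⟩ := exists_norm_eq_betaGirth n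
  obtain ⟨u, hu, hu1, hmu⟩ := exists_norm_eq_betaGirth m
  obtain ⟨v, hv, hv1, hvnorm⟩ :=
    FreeGroup.exists_ne_one_mem_derivedSeries_add_norm_le ha ha1 hu hu1
  calc betaGirth (n + m) ≤ v.norm := betaGirth_le_norm hv hv1
    _ ≤ a.norm * u.norm := hvnorm
    _ = betaGirth n * betaGirth m := by rw [hna, hmu]
end

section
/- Define recursively in the free group F₂ = ⟨a,b⟩: a₀ = a, b₀ = b, a_{n+1} = [b_n^{-1}, a_n], b_{n+1} = [a_n, b_n]. Then for all n, the products a_n a_n, b_n b_n, a_n^{-1} b_n, b_n^{-1} a_n, a_n b_n^{-1}, b_n a_n^{-1}, a_n^{-1} b_n^{-1}, and b_n a_n involve no cancellation, i.e., the length of each product equals the sum of the lengths of the factors. -/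
open scoped commutatorElement

/-- `abPair n = (aₙ, bₙ)` with `a₀ = a`, `b₀ = b`, `a_{n+1} = [bₙ⁻¹, aₙ]`,
`b_{n+1} = [aₙ, bₙ]` in the free group on two generators. -/
def abPair : ℕ → FreeGroup (Fin 2) × FreeGroup (Fin 2)
  | 0 => (FreeGroup.of 0, FreeGroup.of 1)
  | n + 1 => (⁅(abPair n).2⁻¹, (abPair n).1⁆, ⁅(abPair n).1, (abPair n).2⁆)

/-!
Follow the first and last letters of the reduced words of `a = aₙ`, `b = bₙ` and `ab`. A product
of reduced words is their concatenation as soon as the two letters at the junction do not cancel,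
and `aₙ₊₁ = b⁻¹ (ab) a⁻¹`, `bₙ₊₁ = (ab) (a⁻¹b⁻¹)`, `aₙ₊₁ bₙ₊₁ = (b⁻¹ab) (ba⁻¹b⁻¹)` are such
products. So if `a` runs from `p` to `q` and `b` from `r` to `s`, then `aₙ₊₁` runs from `s⁻¹` to
`p⁻¹` and `bₙ₊₁` from `p` to `r⁻¹`, and five junction conditions between these letters reproduce
themselves; they cover the eight products of the statement.
-/

namespace FreeGroup

variable {α : Type*}

def invLetter (u : α × Bool) : α × Bool := (u.1, !u.2)

@[simp] lemma invLetter_invLetter (u : α × Bool) : invLetter (invLetter u) = u := by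
  simp [invLetter]

@[simp] lemma invLetter_inj {u v : α × Bool} : invLetter u = invLetter v ↔ u = v := by
  simp [invLetter, Prod.ext_iff]

lemma ne_invLetter_iff {u v : α × Bool} : v ≠ invLetter u ↔ (u.1 = v.1 → u.2 = v.2) := by
  obtain ⟨a, s⟩ := u; obtain ⟨b, t⟩ := v
  cases s <;> cases t <;> simp [invLetter, eq_comm]

variable [DecidableEq α]

structure HasEnds (x : FreeGroup α) (p q : α × Bool) : Prop where
  head : x.toWord.head? = some p
  last : x.toWord.getLast? = some q

lemma hasEnds_of (a : α) : HasEnds (of a) (a, true) (a, true) :=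
  ⟨by simp [toWord_of], by simp [toWord_of]⟩

namespace HasEnds

variable {x y : FreeGroup α} {p q r s : α × Bool}

lemma inv (h : HasEnds x p q) : HasEnds x⁻¹ (invLetter q) (invLetter p) where
  head := by simp [toWord_inv, invRev, h.last, invLetter]
  last := by simp [toWord_inv, invRev, h.head, invLetter]

lemma toWord_mul (hx : HasEnds x p q) (hy : HasEnds y r s) (h : r ≠ invLetter q) :
    (x * y).toWord = x.toWord ++ y.toWord := by
  rw [FreeGroup.toWord_mul, IsReduced.reduce_eq]
  refine isReduced_toWord.append isReduced_toWord ?_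
  rw [hx.last, hy.head]
  simp only [Option.mem_def, Option.some.injEq]
  rintro _ rfl _ rfl
  exact ne_invLetter_iff.mp h

lemma norm_mul (hx : HasEnds x p q) (hy : HasEnds y r s) (h : r ≠ invLetter q) :
    (x * y).norm = x.norm + y.norm := by
  simp [FreeGroup.norm, hx.toWord_mul hy h]

lemma mul (hx : HasEnds x p q) (hy : HasEnds y r s) (h : r ≠ invLetter q) :
    HasEnds (x * y) p s where
  head := by rw [hx.toWord_mul hy h, List.head?_append, hx.head]; rfl
  last := by rw [hx.toWord_mul hy h, List.getLast?_append, hy.last]; rfl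

end HasEnds

end FreeGroup

section

open FreeGroup

variable {α : Type*} [DecidableEq α]

/-- `a` runs from `p` to `q`, `b` from `r` to `s`, `a * b` from `p` to `s`, and the products
`a * a`, `b * b`, `b * a`, `b⁻¹ * a`, `b * a⁻¹` do not cancel at the junction. -/
structure EndLetters (a b : FreeGroup α) (p q r s : α × Bool) : Prop where
  left : HasEnds a p q
  right : HasEnds b r s
  mul : HasEnds (a * b) p s
  aa : p ≠ invLetter q
  bb : r ≠ invLetter s
  ba : p ≠ invLetter s
  inv_b_a : p ≠ r
  b_inv_a : q ≠ s

lemma endLetters_of {x y : α} (h : x ≠ y) :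
    EndLetters (of x) (of y) (x, true) (x, true) (y, true) (y, true) where
  left := hasEnds_of x
  right := hasEnds_of y
  mul := (hasEnds_of x).mul (hasEnds_of y) (by simp [invLetter, h.symm])
  aa := by simp [invLetter]
  bb := by simp [invLetter]
  ba := by simp [invLetter]
  inv_b_a := by simpa using h
  b_inv_a := by simpa using h

lemma EndLetters.commutator {a b : FreeGroup α} {p q r s : α × Bool}
    (h : EndLetters a b p q r s) :
    EndLetters ⁅b⁻¹, a⁆ ⁅a, b⁆ (invLetter s) (invLetter p) p (invLetter r) := by
  have hba : HasEnds (b⁻¹ * (a * b)) (invLetter s) s :=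
    h.right.inv.mul h.mul (by simpa using h.inv_b_a)
  have hab : HasEnds (a⁻¹ * b⁻¹) (invLetter q) (invLetter r) :=
    h.left.inv.mul h.right.inv (by simpa using h.ba.symm)
  have hqs : invLetter q ≠ invLetter s := by simpa using h.b_inv_a
  have e₁ : ⁅b⁻¹, a⁆ = b⁻¹ * (a * b) * a⁻¹ := by group
  have e₂ : ⁅a, b⁆ = a * b * (a⁻¹ * b⁻¹) := by group
  have e₃ : ⁅b⁻¹, a⁆ * ⁅a, b⁆ = b⁻¹ * (a * b) * (b * (a⁻¹ * b⁻¹)) := by group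
  refine ⟨?_, ?_, ?_, ?_, ?_, ?_, ?_, ?_⟩
  · rw [e₁]; exact hba.mul h.left.inv hqs
  · rw [e₂]; exact h.mul.mul hab hqs
  · rw [e₃]; exact hba.mul (h.right.mul hab hqs) h.bb
  · simpa using h.ba.symm
  · simpa using h.inv_b_a
  · simpa using h.bb.symm
  · exact h.ba.symm
  · simpa using h.inv_b_a

lemma exists_endLetters_abPair (n : ℕ) :
    ∃ p q r s, EndLetters (abPair n).1 (abPair n).2 p q r s := by
  induction n with
  | zero => exact ⟨_, _, _, _, endLetters_of (by decide)⟩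
  | succ n ih =>
    obtain ⟨p, q, r, s, h⟩ := ih
    exact ⟨_, _, _, _, h.commutator⟩

end

theorem abPair_no_cancellation (n : ℕ) :
    letI a := (abPair n).1
    letI b := (abPair n).2
    (a * a).norm = a.norm + a.norm ∧
    (b * b).norm = b.norm + b.norm ∧
    (a⁻¹ * b).norm = a⁻¹.norm + b.norm ∧
    (b⁻¹ * a).norm = b⁻¹.norm + a.norm ∧
    (a * b⁻¹).norm = a.norm + b⁻¹.norm ∧
    (b * a⁻¹).norm = b.norm + a⁻¹.norm ∧
    (a⁻¹ * b⁻¹).norm = a⁻¹.norm + b⁻¹.norm ∧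
    (b * a).norm = b.norm + a.norm := by
  obtain ⟨p, q, r, s, h⟩ := exists_endLetters_abPair n
  have ha := h.left
  have hb := h.right
  exact ⟨ha.norm_mul ha h.aa, hb.norm_mul hb h.bb,
    ha.inv.norm_mul hb (by simpa using h.inv_b_a.symm),
    hb.inv.norm_mul ha (by simpa using h.inv_b_a),
    ha.norm_mul hb.inv (by simpa using h.b_inv_a.symm),
    hb.norm_mul ha.inv (by simpa using h.b_inv_a),
    ha.inv.norm_mul hb.inv (by simpa using h.ba.symm),
    hb.norm_mul ha h.ba⟩
end

section
/- For every n ∈ ℕ, girth(F₂^{(n)}) ≥ 3^n; i.e., every nontrivial element of the n-th derived subgroup of the free group on two generators has word length at least 3^n. -/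
/-!
Let `Q = F ⧸ Λ` and read a word as a walk in the Cayley graph of `Q`. The Magnus embedding
`F ⧸ [Λ, Λ] ↪ ℤ^α ≀ Q` records the signed number of traversals of every edge, so the closed
walk of an element of `[Λ, Λ]` crosses each edge as often in one direction as in the other.
For a cyclically reduced such word, pair each step with a reverse crossing of the same edge:
as the walk never backtracks, the pairing is forced to be a reflection `i ↦ c - i` of the
cyclic positions unless some vertex is visited three times, and a reflection either fixes a
step or pairs two consecutive steps, both impossible. Three visits split the word into three
cyclic subwords that are nontrivial reduced elements of `Λ`, so its length is at least
`3 · girth Λ`. Iterating along the derived series gives `3 ^ n`.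
-/

namespace ZMod

variable {n : ℕ} [NeZero n]

theorem val_add_one_eq_mod (i : ZMod n) : (i + 1).val = (i.val + 1) % n := by
  rw [val_add, val_one_eq_one_mod, Nat.add_mod_mod]

theorem val_sub_add_val_sub_add_val_sub_eq {a b c : ZMod n} (hab : a ≠ b) (hbc : b ≠ c)
    (hac : a ≠ c) :
    (b - a).val + (c - b).val + (a - c).val = n ∨ (c - a).val + (b - c).val + (a - b).val = n := by
  obtain ⟨x, rfl⟩ : ∃ x, b = a + x := ⟨b - a, by ring⟩
  obtain ⟨y, rfl⟩ : ∃ y, c = a + x + y := ⟨c - (a + x), by ring⟩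
  have hx : x ≠ 0 := by rintro rfl; simp at hab
  have hy : y ≠ 0 := by rintro rfl; simp at hbc
  have hxy : x + y ≠ 0 := by intro h; apply hac; rw [add_assoc, h, add_zero]
  rw [show a + x - a = x by ring, show a + x + y - (a + x) = y by ring,
    show a - (a + x + y) = -(x + y) by ring, show a + x + y - a = x + y by ring,
    show a + x - (a + x + y) = -y by ring, show a - (a + x) = -x by ring,
    neg_val, neg_val, neg_val, if_neg hx, if_neg hy, if_neg hxy, val_add]
  have := val_lt x
  have := val_lt y
  have := (val_ne_zero x).mpr hx
  have := (val_ne_zero y).mpr hy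
  rcases lt_or_ge (x.val + y.val) n with h | h
  · rw [Nat.mod_eq_of_lt h]; omega
  · rw [Nat.mod_eq_sub_mod h, Nat.mod_eq_of_lt (by omega)]; omega

/-- Read `v` as the vertices of a closed walk and `m i` as a step traversing the edge of step `i`
backwards. -/
theorem exists_triple_of_pairing {V : Type*} (v : ZMod n → V) (m : ZMod n → ZMod n)
    (hm : ∀ i, m i ≠ i) (hm_succ : ∀ i, m i ≠ i + 1) (hm_pred : ∀ i, m (i + 1) ≠ i)
    (hv : ∀ i, v (m i) = v (i + 1)) (hv_succ : ∀ i, v (m i + 1) = v i) :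
    ∃ a b c, a ≠ b ∧ b ≠ c ∧ a ≠ c ∧ v a = v b ∧ v a = v c := by
  by_contra! h
  have hstep (i : ZMod n) : m (i + 1) = m i - 1 := by
    by_contra hne
    refine h (i + 1) (m i) (m (i + 1) + 1) (hm_succ i).symm ?_ ?_ (hv i).symm (hv_succ _).symm
    · intro heq; exact hne (by rw [heq]; ring)
    · intro heq; exact hm_pred i (add_right_cancel heq).symm
  have hlin (k : ℕ) : m k = m 0 - k := by
    induction k with
    | zero => simp
    | succ k ih => rw [Nat.cast_succ, hstep, ih]; ring
  obtain ⟨k, hk | hk⟩ := Nat.even_or_odd' (m 0).val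
  · apply hm k
    rw [hlin, ← natCast_zmod_val (m 0), hk]; push_cast; ring
  · apply hm_pred k
    rw [← Nat.cast_succ, hlin, ← natCast_zmod_val (m 0), hk]; push_cast; ring

end ZMod

theorem List.getElem_append_self {β : Type*} {L : List β} {k : ℕ} (hk : k < 2 * L.length) :
    (L ++ L)[k]'(by simp; omega) = L[k % L.length]'(Nat.mod_lt _ (by omega)) := by
  rcases lt_or_ge k L.length with h | h
  · rw [List.getElem_append_left h]; simp [Nat.mod_eq_of_lt h]
  · rw [List.getElem_append_right h]
    simp [Nat.mod_eq_sub_mod h, Nat.mod_eq_of_lt (show k - L.length < L.length by omega)]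

namespace FreeGroup

variable {α Q : Type*} [Group Q]

theorem mk_singleton_not (x : α × Bool) : mk [(x.1, !x.2)] = (mk [x])⁻¹ := by
  rw [inv_mk]; simp [invRev]

theorem IsReduced.norm_mk [DecidableEq α] {L : List (α × Bool)} (h : IsReduced L) :
    (mk L).norm = L.length := by
  rw [norm, toWord_mk, h.reduce_eq]

theorem IsCyclicallyReduced.isReduced_append_self {L : List (α × Bool)}
    (h : IsCyclicallyReduced L) : IsReduced (L ++ L) := by
  simpa using (h.flatten_replicate 2).isReduced

section Walk

variable (π : FreeGroup α →* Q)

def walkVertex (L : List (α × Bool)) (k : ℕ) : Q := π (mk (L.take k))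

/-- The edge of the Cayley graph of `Q` crossed by the letter `x` read at the vertex `v`,
recorded as the pair (initial vertex, label) of the edge `q ⟶ q * π (of label)`. -/
def crossedEdge (v : Q) (x : α × Bool) : Q × α :=
  (if x.2 then v else v * π (mk [x]), x.1)

variable {π}

theorem walkVertex_succ (L : List (α × Bool)) {k : ℕ} (hk : k < L.length) :
    walkVertex π L (k + 1) = walkVertex π L k * π (mk [L[k]]) := by
  rw [walkVertex, walkVertex, List.take_add_one, List.getElem?_eq_getElem hk, ← _root_.map_mul,
    mul_mk]
  rfl

theorem walkVertex_append_self {L : List (α × Bool)} (hclosed : π (mk L) = 1) {k : ℕ}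
    (hk : k < 2 * L.length) : walkVertex π (L ++ L) k = walkVertex π L (k % L.length) := by
  rcases lt_or_ge k L.length with h | h
  · rw [Nat.mod_eq_of_lt h, walkVertex, walkVertex, List.take_append_of_le_length h.le]
  · obtain ⟨r, rfl⟩ := Nat.exists_eq_add_of_le h
    rw [walkVertex, walkVertex, List.take_length_add_append, ← mul_mk, _root_.map_mul, hclosed,
      one_mul, Nat.add_mod_left, Nat.mod_eq_of_lt (by omega)]

theorem eq_of_crossedEdge_eq {u v : Q} {x y : α × Bool}
    (he : crossedEdge π v y = crossedEdge π u x) (hb : y.2 = !x.2) :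
    y = (x.1, !x.2) ∧ v = u * π (mk [x]) ∧ v * π (mk [y]) = u := by
  obtain rfl : y = (x.1, !x.2) := Prod.ext (congrArg Prod.snd he) hb
  have hinv := congrArg π (mk_singleton_not x)
  rw [_root_.map_inv] at hinv
  obtain ⟨a, _ | _⟩ := x <;> simp_all [crossedEdge, mul_inv_eq_iff_eq_mul]

end Walk

section Magnus

variable [DecidableEq α] [DecidableEq Q] (π : FreeGroup α →* Q)

/-- The Magnus embedding of `F ⧸ [ker π, ker π]`: the left coordinate of `magnus π w` at `q`
counts, for each label `a`, the signed traversals of the edge `q ⟶ q * π (of a)` by `w`. -/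
def magnus : FreeGroup α →* Multiplicative (α → ℤ) ≀ᵣ Q :=
  FreeGroup.lift fun a => ⟨Pi.mulSingle 1 (.ofAdd (Pi.single a 1)), π (of a)⟩

theorem right_magnus (w : FreeGroup α) : (magnus π w).right = π w := by
  have : RegularWreathProduct.rightHom.comp (magnus π) = π :=
    FreeGroup.ext_hom _ _ fun a => by simp [magnus]
  exact DFunLike.congr_fun this w

theorem magnus_eq_one_of_mem_commutator {w : FreeGroup α} (hw : w ∈ ⁅π.ker, π.ker⁆) :
    magnus π w = 1 := by
  suffices ⁅π.ker, π.ker⁆ ≤ (magnus π).ker from this hw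
  rw [Subgroup.commutator_le]
  intro x hx y hy
  rw [MonoidHom.mem_ker] at hx hy ⊢
  rw [map_commutatorElement, commutatorElement_eq_one_iff_mul_comm]
  ext q
  · simp [right_magnus, hx, hy, mul_comm]
  · simp [right_magnus, hx, hy]

theorem left_magnus_mk (L : List (α × Bool)) (q : Q) :
    (magnus π (mk L)).left q =
      ∏ j : Fin L.length, (magnus π (mk [L[j]])).left ((walkVertex π L j)⁻¹ * q) := by
  induction L generalizing q with
  | nil =>
    change (magnus π 1).left q = 1
    simp
  | cons x L ih =>
    rw [← List.singleton_append, ← mul_mk, _root_.map_mul, RegularWreathProduct.mul_left,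
      Pi.mul_apply, ih, List.singleton_append]
    refine Eq.trans ?_ (Fin.prod_univ_succ (n := L.length) _).symm
    have hnil : π (mk []) = 1 := π.map_one
    have hcons (i : ℕ) : π (mk (x :: L.take i)) = π (mk [x]) * π (mk (L.take i)) := by
      rw [← _root_.map_mul, mul_mk]; rfl
    simp [walkVertex, right_magnus, hnil, hcons, mul_assoc]

theorem toAdd_left_magnus_mk_singleton (v q : Q) (x : α × Bool) (a : α) :
    ((magnus π (mk [x])).left (v⁻¹ * q)).toAdd a =
      if crossedEdge π v x = (q, a) then (if x.2 then 1 else -1) else 0 := by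
  obtain ⟨b, _ | _⟩ := x
  · have hmk : mk [(b, false)] = (of b)⁻¹ := mk_singleton_not (b, true)
    rcases eq_or_ne (v * (π (of b))⁻¹) q with rfl | hq
    · simp [magnus, crossedEdge, hmk, Pi.single_apply, eq_comm]
      split_ifs <;> rfl
    · have : π (of b) * (v⁻¹ * q) ≠ 1 := fun h =>
        hq (by simpa [mul_assoc] using (congrArg (v * (π (of b))⁻¹ * ·) h).symm)
      simp [magnus, crossedEdge, hmk, this, hq]
  · rcases eq_or_ne v q with rfl | hq
    · simp [magnus, crossedEdge, Pi.single_apply, eq_comm]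
    · simp [magnus, crossedEdge, inv_mul_eq_one, hq]

variable {π}

theorem sum_crossings_eq_zero {L : List (α × Bool)} (hL : mk L ∈ ⁅π.ker, π.ker⁆) (e : Q × α) :
    ∑ j : Fin L.length,
      (if crossedEdge π (walkVertex π L j) L[j] = e then (if L[j].2 then 1 else -1 : ℤ) else 0)
      = 0 := by
  obtain ⟨q, a⟩ := e
  have h : ((magnus π (mk L)).left q).toAdd a = 0 := by
    rw [magnus_eq_one_of_mem_commutator π hL]; rfl
  rw [left_magnus_mk, toAdd_prod, Finset.sum_apply] at h
  simpa only [toAdd_left_magnus_mk_singleton] using h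

theorem exists_reverse_crossing {L : List (α × Bool)} (hL : mk L ∈ ⁅π.ker, π.ker⁆)
    (i : Fin L.length) :
    ∃ j : Fin L.length, crossedEdge π (walkVertex π L j) L[j] =
      crossedEdge π (walkVertex π L i) L[i] ∧ L[j].2 = !L[i].2 := by
  by_contra! h
  set e := crossedEdge π (walkVertex π L i) L[i]
  set s : ℤ := if L[i].2 then 1 else -1
  have hsum := sum_crossings_eq_zero hL e
  rw [← Finset.sum_filter] at hsum
  have hconst : ∀ j ∈ Finset.univ.filter fun j : Fin L.length =>
      crossedEdge π (walkVertex π L j) L[j] = e, (if L[j].2 then 1 else -1 : ℤ) = s := by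
    intro j hj
    rw [Bool.not_eq_not.mp (h j (Finset.mem_filter.mp hj).2)]
  have hi : i ∈ Finset.univ.filter fun j : Fin L.length =>
      crossedEdge π (walkVertex π L j) L[j] = e := by simp [e]
  rw [Finset.sum_congr rfl hconst, Finset.sum_const, Int.nsmul_eq_mul, mul_eq_zero] at hsum
  rcases hsum with hcard | hs
  · exact Finset.card_ne_zero_of_mem hi (by exact_mod_cast hcard)
  · exact (by simp only [s]; split <;> norm_num : s ≠ 0) hs

end Magnus

section CyclicWalk

variable {π : FreeGroup α →* Q} {L : List (α × Bool)} [NeZero L.length]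

def letterAt (L : List (α × Bool)) [NeZero L.length] (i : ZMod L.length) : α × Bool :=
  L[i.val]'i.val_lt

theorem walkVertex_val_add_one (hclosed : π (mk L) = 1) (i : ZMod L.length) :
    walkVertex π L (i + 1).val = walkVertex π L i.val * π (mk [letterAt L i]) := by
  rw [letterAt, ← walkVertex_succ L i.val_lt, ZMod.val_add_one_eq_mod]
  rcases (show i.val + 1 ≤ L.length from i.val_lt).lt_or_eq with h | h
  · rw [Nat.mod_eq_of_lt h]
  · rw [h, Nat.mod_self, walkVertex, walkVertex, List.take_length, hclosed, List.take_zero]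
    exact π.map_one

theorem letterAt_add_one_ne (hL : IsCyclicallyReduced L) (i : ZMod L.length) :
    letterAt L (i + 1) ≠ ((letterAt L i).1, !(letterAt L i).2) := by
  have hn := i.val_lt
  have := List.isChain_iff_getElem.mp hL.isReduced_append_self i.val (by simp; omega)
  rw [List.getElem_append_self (by omega), List.getElem_append_self (by omega)] at this
  simp only [letterAt, ZMod.val_add_one_eq_mod, Nat.mod_eq_of_lt hn] at this ⊢
  intro h
  simp [h] at this

/-- The arc of the cyclic word from `s` to `t` is a reduced word representing an element of
`ker π`, because both ends lie at the same vertex. -/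
theorem le_val_sub_of_walkVertex_eq [DecidableEq α] (hL : IsCyclicallyReduced L)
    (hclosed : π (mk L) = 1) {g : ℕ} (hg : ∀ x ∈ π.ker, x ≠ 1 → g ≤ x.norm)
    {s t : ZMod L.length} (hst : s ≠ t) (hv : walkVertex π L s.val = walkVertex π L t.val) :
    g ≤ (t - s).val := by
  set k := (t - s).val
  set seg := ((L ++ L).drop s.val).take k
  have hs := s.val_lt
  have hk := (t - s).val_lt
  have hk0 : k ≠ 0 := by simpa [k, sub_eq_zero] using hst.symm
  have hlen : seg.length = k := by
    simp only [seg, List.length_take, List.length_drop, List.length_append]; omega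
  have hred : IsReduced seg := hL.isReduced_append_self.infix
    ((List.take_prefix _ _).isInfix.trans (List.drop_suffix _ _).isInfix)
  have hseg : π (mk seg) = 1 := by
    have hsplit :
        walkVertex π (L ++ L) (s.val + k) = walkVertex π (L ++ L) s.val * π (mk seg) := by
      rw [walkVertex, walkVertex, List.take_add, ← mul_mk, _root_.map_mul]
    rwa [walkVertex_append_self hclosed (by omega), walkVertex_append_self hclosed (by omega),
      Nat.mod_eq_of_lt hs, ← ZMod.val_add, add_sub_cancel, ← hv, left_eq_mul] at hsplit
  have hseg_ne : mk seg ≠ 1 := fun h =>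
    hk0 (by rw [← hlen, ← hred.norm_mk, h, FreeGroup.norm_one])
  simpa [hred.norm_mk, hlen] using hg (mk seg) hseg hseg_ne

theorem three_mul_le_length_of_walkVertex_eq [DecidableEq α] (hL : IsCyclicallyReduced L)
    (hclosed : π (mk L) = 1) {g : ℕ} (hg : ∀ x ∈ π.ker, x ≠ 1 → g ≤ x.norm)
    {a b c : ZMod L.length} (hab : a ≠ b) (hbc : b ≠ c) (hac : a ≠ c)
    (hb : walkVertex π L a.val = walkVertex π L b.val)
    (hc : walkVertex π L a.val = walkVertex π L c.val) : 3 * g ≤ L.length := by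
  have gap {s t : ZMod L.length} (hst : s ≠ t)
      (hv : walkVertex π L s.val = walkVertex π L t.val) :=
    le_val_sub_of_walkVertex_eq hL hclosed hg hst hv
  have := gap hab hb; have := gap hab.symm hb.symm
  have := gap hac hc; have := gap hac.symm hc.symm
  have := gap hbc (hb.symm.trans hc); have := gap hbc.symm (hc.symm.trans hb)
  rcases ZMod.val_sub_add_val_sub_add_val_sub_eq hab hbc hac with h | h <;> omega

theorem exists_reverse_step [DecidableEq α] [DecidableEq Q] (hL : mk L ∈ ⁅π.ker, π.ker⁆)
    (i : ZMod L.length) : ∃ j : ZMod L.length,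
      letterAt L j = ((letterAt L i).1, !(letterAt L i).2) ∧
      walkVertex π L j.val = walkVertex π L (i + 1).val ∧
      walkVertex π L (j + 1).val = walkVertex π L i.val := by
  have hclosed : π (mk L) = 1 := Subgroup.commutator_le_left _ _ hL
  obtain ⟨j, he, hb⟩ := exists_reverse_crossing hL ⟨i.val, i.val_lt⟩
  obtain ⟨hletter, hv, hv'⟩ := eq_of_crossedEdge_eq he hb
  have hj : ((j : ℕ) : ZMod L.length).val = j := ZMod.val_cast_of_lt j.isLt
  refine ⟨j, ?_, ?_, ?_⟩
  · simp only [letterAt, hj]; exact hletter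
  · rw [walkVertex_val_add_one hclosed, hj]; exact hv
  · rw [walkVertex_val_add_one hclosed]; simpa only [letterAt, hj, Fin.getElem_fin] using hv'

end CyclicWalk

theorem three_mul_le_length_of_mem_commutator [DecidableEq α] [DecidableEq Q]
    {π : FreeGroup α →* Q} {L : List (α × Bool)} (hL : IsCyclicallyReduced L) (hne : L ≠ [])
    (hmem : mk L ∈ ⁅π.ker, π.ker⁆) {g : ℕ} (hg : ∀ x ∈ π.ker, x ≠ 1 → g ≤ x.norm) :
    3 * g ≤ L.length := by
  have : NeZero L.length := ⟨by simpa using hne⟩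
  have hclosed : π (mk L) = 1 := Subgroup.commutator_le_left _ _ hmem
  choose m hm_letter hm_vertex hm_vertex_succ using exists_reverse_step hmem
  have hm (i : ZMod L.length) : m i ≠ i := fun h => by
    have := hm_letter i
    rw [h] at this
    simpa using congrArg Prod.snd this
  have hm_succ (i : ZMod L.length) : m i ≠ i + 1 := fun h =>
    letterAt_add_one_ne hL i (h ▸ hm_letter i)
  have hm_pred (i : ZMod L.length) : m (i + 1) ≠ i := fun h => by
    have := hm_letter (i + 1)
    rw [h] at this
    exact letterAt_add_one_ne hL i (by simp [this])
  obtain ⟨a, b, c, hab, hbc, hac, hb, hc⟩ := ZMod.exists_triple_of_pairing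
    (fun i => walkVertex π L i.val) m hm hm_succ hm_pred hm_vertex hm_vertex_succ
  exact three_mul_le_length_of_walkVertex_eq hL hclosed hg hab hbc hac hb hc

theorem three_mul_le_norm_of_mem_commutator [DecidableEq α] (Λ : Subgroup (FreeGroup α))
    [Λ.Normal] {g : ℕ} (hg : ∀ x ∈ Λ, x ≠ 1 → g ≤ x.norm) {w : FreeGroup α} (hw : w ∈ ⁅Λ, Λ⁆)
    (hne : w ≠ 1) : 3 * g ≤ w.norm := by
  classical
  set C := reduceCyclically.conjugator w.toWord
  set R := reduceCyclically w.toWord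
  have hw' : w = mk C * mk R * (mk C)⁻¹ := by
    rw [inv_mk, mul_mk, mul_mk, reduceCyclically.conj_conjugator_reduceCyclically, mk_toWord]
  have hR : mk R ∈ ⁅Λ, Λ⁆ := by
    have := (Subgroup.commutator_normal Λ Λ).conj_mem w hw (mk C)⁻¹
    rwa [hw', inv_inv, show ∀ x y : FreeGroup α, x⁻¹ * (x * y * x⁻¹) * x = y by intros; group]
      at this
  have hR_ne : R ≠ [] := by
    rintro h; apply hne; rw [hw', h, ← one_eq_mk]; group
  have hlen : w.norm = C.length + R.length + C.length := by
    rw [FreeGroup.norm, ← reduceCyclically.conj_conjugator_reduceCyclically w.toWord]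
    simp [C, R, add_assoc]
  have hker : (QuotientGroup.mk' Λ).ker = Λ := QuotientGroup.ker_mk' Λ
  have := three_mul_le_length_of_mem_commutator (π := QuotientGroup.mk' Λ) (L := R)
    (reduceCyclically.isCyclicallyReduced isReduced_toWord) hR_ne (by rwa [hker]) (by rwa [hker])
  omega

end FreeGroup

theorem girth_derivedSeries (n : ℕ) (w : FreeGroup (Fin 2))
    (hw : w ∈ derivedSeries (FreeGroup (Fin 2)) n) (hne : w ≠ 1) :
    3 ^ n ≤ w.norm := by
  induction n generalizing w with
  | zero => simpa [Nat.one_le_iff_ne_zero] using hne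
  | succ n ih =>
    rw [derivedSeries_succ] at hw
    rw [pow_succ']
    exact FreeGroup.three_mul_le_norm_of_mem_commutator _ ih hw hne
end
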